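/- Let A be a finite-dimensional dialgebra (vector space with two bilinear products), C a subalgebra of A, and B an ideal of A with B ⊆ F(C), where F(C) is the intersection of all maximal subalgebras of C. Then B ⊆ F(A). -/

import Mathlib

/-!  Framework: dialgebras and Poisson algebras as bilinear structures on a module. -/

variable {F P : Type*} [Field F] [AddCommGroup P] [Module F P]

/-- A dialgebra: a vector space with two bilinear multiplications. -/
structure Dialgebra (F P : Type*) [Field F] [AddCommGroup P] [Module F P] where
  mul : P →ₗ[F] P →ₗ[F] P
  bracket : P →ₗ[F] P →ₗ[F] P

namespace Dialgebra

variable (D : Dialgebra F P)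

/-- Span of the set of products `a·b`, `a ∈ A`, `b ∈ B`. -/
def pmul (A B : Submodule F P) : Submodule F P :=
  Submodule.span F (Set.image2 (fun a b => D.mul a b) (A : Set P) (B : Set P))

/-- Span of the set of brackets `[a,b]`, `a ∈ A`, `b ∈ B`. -/
def pbra (A B : Submodule F P) : Submodule F P :=
  Submodule.span F (Set.image2 (fun a b => D.bracket a b) (A : Set P) (B : Set P))

/-- `A·B + [A,B]`. -/
def psq (A B : Submodule F P) : Submodule F P := D.pmul A B ⊔ D.pbra A B

/-- A subalgebra: a subspace closed under both products. -/
def IsSubalgebra (A : Submodule F P) : Prop := D.psq A A ≤ A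

/-- An ideal of the dialgebra. -/
def IsIdeal (A : Submodule F P) : Prop :=
  D.pmul A ⊤ ≤ A ∧ D.pmul ⊤ A ≤ A ∧ D.pbra A ⊤ ≤ A ∧ D.pbra ⊤ A ≤ A

/-- `A` is an ideal of the subalgebra `U`. -/
def IsIdealIn (A U : Submodule F P) : Prop :=
  A ≤ U ∧ D.pmul A U ≤ A ∧ D.pmul U A ≤ A ∧ D.pbra A U ≤ A ∧ D.pbra U A ≤ A

/-- Lower central series of `B`: `B^1 = B`, `B^{n+1} = B^n·B + [B^n,B]`. -/
def lcs (B : Submodule F P) : ℕ → Submodule F P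
  | 0 => B
  | n + 1 => D.psq (lcs B n) B

/-- `B` is nilpotent as a dialgebra. -/
def IsNilpotentSub (B : Submodule F P) : Prop := ∃ n, D.lcs B n = ⊥

/-- Derived series of `B`. -/
def ders (B : Submodule F P) : ℕ → Submodule F P
  | 0 => B
  | n + 1 => D.psq (ders B n) (ders B n)

/-- `B` is solvable as a dialgebra. -/
def IsSolvableSub (B : Submodule F P) : Prop := ∃ n, D.ders B n = ⊥

/-- Associative powers: `apow B n = B_A^{n+1}`, i.e. `apow B 0 = B_A^1 = B`. -/
def apow (B : Submodule F P) : ℕ → Submodule F P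
  | 0 => B
  | n + 1 => D.pmul (apow B n) B

/-- Lie powers: `lpow B n = B_L^{n+1}`. -/
def lpow (B : Submodule F P) : ℕ → Submodule F P
  | 0 => B
  | n + 1 => D.pbra (lpow B n) B

/-- Associative nilpotency of `B`. -/
def AssocNilpotent (B : Submodule F P) : Prop := ∃ n, D.apow B n = ⊥

/-- Lie nilpotency of `B`. -/
def LieNilpotent (B : Submodule F P) : Prop := ∃ n, D.lpow B n = ⊥

/-- `mulPows B X n = X·B_A^n` (with the convention that it is `X` for `n = 0`). -/
def mulPows (B X : Submodule F P) : ℕ → Submodule F P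
  | 0 => X
  | n + 1 => D.pmul (mulPows B X n) B

/-- `M` is a maximal (proper) subalgebra of the subalgebra `U`. -/
def IsMaximalSubalgebraIn (U M : Submodule F P) : Prop :=
  D.IsSubalgebra M ∧ M < U ∧ ∀ K, D.IsSubalgebra K → M ≤ K → K ≤ U → K = M ∨ K = U

/-- Frattini subalgebra of the subalgebra `U`: intersection of its maximal subalgebras. -/
def frattiniIn (U : Submodule F P) : Submodule F P :=
  U ⊓ sInf {M | D.IsMaximalSubalgebraIn U M}

/-- Frattini ideal of the subalgebra `U`: largest ideal of `U` inside `frattiniIn U`. -/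
def phiIn (U : Submodule F P) : Submodule F P :=
  sSup {I | D.IsIdealIn I U ∧ I ≤ D.frattiniIn U}

/-- Frattini subalgebra of the dialgebra. -/
def frattini : Submodule F P := D.frattiniIn ⊤

/-- Frattini ideal of the dialgebra. -/
def phi : Submodule F P := sSup {I | D.IsIdeal I ∧ I ≤ D.frattini}

/-- Minimal ideal. -/
def IsMinimalIdeal (A : Submodule F P) : Prop :=
  D.IsIdeal A ∧ A ≠ ⊥ ∧ ∀ I, D.IsIdeal I → I ≤ A → I = ⊥ ∨ I = A

/-- Zero (trivial-multiplication) subspace. -/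
def IsZeroAlg (A : Submodule F P) : Prop := D.pmul A A = ⊥ ∧ D.pbra A A = ⊥

/-- Zero socle: sum of the minimal zero ideals. -/
def zsoc : Submodule F P := sSup {A | D.IsMinimalIdeal A ∧ D.IsZeroAlg A}

/-- Socle: sum of the minimal ideals. -/
def soc : Submodule F P := sSup {A | D.IsMinimalIdeal A}

/-- Annihilator of `B` in the algebra. -/
def annih (B : Submodule F P) : Submodule F P where
  carrier := {x | ∀ b ∈ B, D.mul x b = 0 ∧ D.bracket x b = 0}
  add_mem' := by
    intro x y hx hy b hb
    have h1 := hx b hb; have h2 := hy b hb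
    constructor <;> simp [map_add, LinearMap.add_apply, h1.1, h1.2, h2.1, h2.2]
  zero_mem' := by intro b hb; simp
  smul_mem' := by
    intro c x hx b hb
    have h := hx b hb
    constructor <;> simp [map_smul, LinearMap.smul_apply, h.1, h.2]

/-- `R` is the solvable radical: the largest solvable ideal. -/
def IsRadical (R : Submodule F P) : Prop :=
  D.IsIdeal R ∧ D.IsSolvableSub R ∧ ∀ I, D.IsIdeal I → D.IsSolvableSub I → I ≤ R

/-- `N` is the nilradical: the largest nilpotent ideal. -/
def IsNilradical (N : Submodule F P) : Prop :=
  D.IsIdeal N ∧ D.IsNilpotentSub N ∧ ∀ I, D.IsIdeal I → D.IsNilpotentSub I → I ≤ N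

end Dialgebra

/-- A Poisson algebra: commutative associative product and Lie bracket linked by the Leibniz rule. -/
structure PoissonAlgebra (F P : Type*) [Field F] [AddCommGroup P] [Module F P]
    extends Dialgebra F P where
  mul_comm : ∀ x y, mul x y = mul y x
  mul_assoc : ∀ x y z, mul (mul x y) z = mul x (mul y z)
  lie_self : ∀ x, bracket x x = 0
  leibniz_lie : ∀ x y z, bracket x (bracket y z) = bracket (bracket x y) z + bracket y (bracket x z)
  leibniz : ∀ x y z, bracket (mul x y) z = mul (bracket x z) y + mul x (bracket y z)

/-!
If a maximal subalgebra `M` of `A` did not contain the ideal `B`, then `M + B = A`, and the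
modular law gives `C = (C ∩ M) + B`. Elements of `F(C)` are non-generators of `C` (a proper
subalgebra of `C` lies in a maximal one, which contains `F(C)`), so `C ∩ M = C`, and then
`B ⊆ C ⊆ M`.
-/

namespace Submodule

variable {R M : Type*} [CommSemiring R] [AddCommMonoid M] [Module R M]

theorem map₂_sup_le_sup (f : M →ₗ[R] M →ₗ[R] M) {S I : Submodule R M}
    (hS : map₂ f S S ≤ S) (hIl : map₂ f I ⊤ ≤ I) (hIr : map₂ f ⊤ I ≤ I) :
    map₂ f (S ⊔ I) (S ⊔ I) ≤ S ⊔ I := by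
  rw [map₂_sup_left, map₂_sup_right, sup_le_iff, sup_le_iff]
  have hSI : map₂ f S I ≤ I := (map₂_le_map₂_left le_top).trans hIr
  have hIS : map₂ f I (S ⊔ I) ≤ I := (map₂_le_map₂_right le_top).trans hIl
  exact ⟨⟨le_sup_of_le_left hS, le_sup_of_le_right hSI⟩, le_sup_of_le_right hIS⟩

theorem map₂_inf_le_inf (f : M →ₗ[R] M →ₗ[R] M) {S T : Submodule R M}
    (hS : map₂ f S S ≤ S) (hT : map₂ f T T ≤ T) : map₂ f (S ⊓ T) (S ⊓ T) ≤ S ⊓ T :=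
  le_inf ((map₂_le_map₂ inf_le_left inf_le_left).trans hS)
    ((map₂_le_map₂ inf_le_right inf_le_right).trans hT)

end Submodule

namespace Dialgebra

open Submodule

variable (D : Dialgebra F P)

theorem pmul_eq_map₂ (A B : Submodule F P) : D.pmul A B = map₂ D.mul A B :=
  (map₂_eq_span_image2 _ _ _).symm

theorem pbra_eq_map₂ (A B : Submodule F P) : D.pbra A B = map₂ D.bracket A B :=
  (map₂_eq_span_image2 _ _ _).symm

theorem isSubalgebra_iff {A : Submodule F P} :
    D.IsSubalgebra A ↔ map₂ D.mul A A ≤ A ∧ map₂ D.bracket A A ≤ A := by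
  rw [IsSubalgebra, psq, sup_le_iff, pmul_eq_map₂, pbra_eq_map₂]

variable {D}

theorem IsSubalgebra.sup_of_isIdeal {M B : Submodule F P} (hM : D.IsSubalgebra M)
    (hB : D.IsIdeal B) : D.IsSubalgebra (M ⊔ B) := by
  obtain ⟨hMmul, hMbra⟩ := D.isSubalgebra_iff.mp hM
  obtain ⟨hBmul, hmulB, hBbra, hbraB⟩ := hB
  simp only [pmul_eq_map₂, pbra_eq_map₂] at hBmul hmulB hBbra hbraB
  exact D.isSubalgebra_iff.mpr
    ⟨map₂_sup_le_sup _ hMmul hBmul hmulB, map₂_sup_le_sup _ hMbra hBbra hbraB⟩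

theorem IsSubalgebra.inf {S T : Submodule F P} (hS : D.IsSubalgebra S) (hT : D.IsSubalgebra T) :
    D.IsSubalgebra (S ⊓ T) := by
  rw [isSubalgebra_iff] at *
  exact ⟨map₂_inf_le_inf _ hS.1 hT.1, map₂_inf_le_inf _ hS.2 hT.2⟩

theorem IsMaximalSubalgebraIn.sup_eq_top {M B : Submodule F P}
    (hM : D.IsMaximalSubalgebraIn ⊤ M) (hB : D.IsIdeal B) (hBM : ¬B ≤ M) : M ⊔ B = ⊤ :=
  (hM.2.2 _ (hM.1.sup_of_isIdeal hB) le_sup_left le_top).resolve_left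
    fun h => hBM (h ▸ le_sup_right)

theorem exists_isMaximalSubalgebraIn_of_lt [IsNoetherian F P] {C S : Submodule F P}
    (hS : D.IsSubalgebra S) (hSC : S < C) : ∃ M, D.IsMaximalSubalgebraIn C M ∧ S ≤ M := by
  obtain ⟨M, ⟨hM, hSM, hMC⟩, hmax⟩ := wellFounded_gt.has_min
    {K | D.IsSubalgebra K ∧ S ≤ K ∧ K < C} ⟨S, hS, le_rfl, hSC⟩
  refine ⟨M, ⟨hM, hMC, fun K hK hMK hKC => ?_⟩, hSM⟩
  rcases hKC.lt_or_eq with hKC | rfl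
  · exact .inl (hMK.eq_of_not_lt (hmax K ⟨hK, hSM.trans hMK, hKC⟩)).symm
  · exact .inr rfl

theorem IsSubalgebra.eq_of_le_sup_frattiniIn [IsNoetherian F P] {C S : Submodule F P}
    (hS : D.IsSubalgebra S) (hSC : S ≤ C) (hC : C ≤ S ⊔ D.frattiniIn C) : S = C := by
  by_contra hne
  obtain ⟨N, hN, hSN⟩ := exists_isMaximalSubalgebraIn_of_lt hS (hSC.lt_of_ne hne)
  have hFN : D.frattiniIn C ≤ N := inf_le_right.trans (sInf_le hN)
  exact hN.2.1.not_ge (hC.trans (sup_le hSN hFN))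

end Dialgebra

/-- An ideal of the dialgebra `A` contained in the Frattini subalgebra of a
subalgebra `C` is contained in the Frattini subalgebra of `A`. -/
theorem ideal_in_frattini_of_subalgebra {F P : Type*} [Field F] [AddCommGroup P] [Module F P]
    [FiniteDimensional F P] (D : Dialgebra F P) (C B : Submodule F P)
    (hC : D.IsSubalgebra C) (hB : D.IsIdeal B) (hBC : B ≤ D.frattiniIn C) :
    B ≤ D.frattini := by
  have hBC' : B ≤ C := hBC.trans inf_le_left
  refine le_inf le_top (le_sInf fun M hM => ?_)
  by_contra hBM
  have hmod : C ⊓ M ⊔ B = C := by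
    rw [inf_sup_assoc_of_le _ hBC', hM.sup_eq_top hB hBM, inf_top_eq]
  have hCM : C ⊓ M = C :=
    (hC.inf hM.1).eq_of_le_sup_frattiniIn inf_le_left (hmod.ge.trans (sup_le_sup_left hBC _))
  exact hBM (hBC'.trans (hCM ▸ inf_le_right))
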